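/- Let n ≥ 1, let ψ : ℝⁿ → ℝ be continuously differentiable with 0 ≤ ψ(x) ≤ 1 and |∇ψ(x)| ≤ K for all x and some K > 0, let m ≥ 1 be an integer and λ ≥ 1, and set ξ(x) = exp(λ(ψ(x) + 6m)) and φ(x) = ξ(x) − λ·exp(6λ(m+1)). Then there exists a constant C > 0, depending only on λ, m and K, such that for all s > 0 and h ∈ (0,1] with s·h ≤ 1, every x ∈ ℝⁿ and every i ∈ {1,…,n}: A_i( ξ^{−3}·exp(−2sφ) )(x) ≤ C·ξ(x)^{−3}·exp(−2s·φ(x)), where A_i f(x) = (f(x + (h/2)e_i) + f(x − (h/2)e_i))/2. -/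

import Mathlib

/-- Discrete average operator in direction `i` with mesh size `h`. -/
noncomputable def Aop {n : ℕ} (h : ℝ) (i : Fin n) (f : (Fin n → ℝ) → ℝ)
    (x : Fin n → ℝ) : ℝ :=
  (f (x + Pi.single i (h / 2)) + f (x - Pi.single i (h / 2))) / 2

/-- The Carleman weight `ξ(x) = exp(λ(ψ(x) + 6m))`. -/
noncomputable def xiW {n : ℕ} (lam : ℝ) (m : ℕ) (ψ : (Fin n → ℝ) → ℝ)
    (x : Fin n → ℝ) : ℝ :=
  Real.exp (lam * (ψ x + 6 * (m : ℝ)))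

/-- The Carleman weight `φ(x) = ξ(x) − λ·exp(6λ(m+1))`. -/
noncomputable def phiW {n : ℕ} (lam : ℝ) (m : ℕ) (ψ : (Fin n → ℝ) → ℝ)
    (x : Fin n → ℝ) : ℝ :=
  xiW lam m ψ x - lam * Real.exp (6 * lam * ((m : ℝ) + 1))

private lemma exp_sub_le_aux (a b M : ℝ) (ha : a ≤ M) (hb : b ≤ M) :
    Real.exp a - Real.exp b ≤ Real.exp M * |a - b| := by
  rcases le_total a b with h | h
  · have h1 : Real.exp a - Real.exp b ≤ 0 := sub_nonpos.2 (Real.exp_le_exp.2 h)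
    exact h1.trans (by positivity)
  · rw [abs_of_nonneg (sub_nonneg.2 h)]
    have key : Real.exp a - Real.exp b ≤ Real.exp a * (a - b) := by
      have h1 := Real.add_one_le_exp (b - a)
      have h2 : Real.exp (b - a) = Real.exp b / Real.exp a := Real.exp_sub b a
      have h3 := Real.exp_pos a
      rw [h2] at h1
      have h1' : (b - a + 1) * Real.exp a ≤ Real.exp b := (le_div_iff₀ h3).mp h1
      nlinarith [Real.exp_pos b]
    exact key.trans (mul_le_mul_of_nonneg_right (Real.exp_le_exp.2 ha) (sub_nonneg.2 h))

private lemma exp_cube_inv (t : ℝ) : ((Real.exp t) ^ 3)⁻¹ = Real.exp (-(3 * t)) := by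
  rw [← Real.exp_nat_mul, ← Real.exp_neg]
  norm_num

/-- For `ψ` a `C¹` cutoff valued in `[0,1]` with `‖∇ψ‖ ≤ K`,
`m ≥ 1`, `λ ≥ 1`, and the weights `ξ = exp(λ(ψ + 6m))`, `φ = ξ − λ·exp(6λ(m+1))`,
there is `C > 0`, depending only on `λ, m, K`, such that for all `s > 0`,
`h ∈ (0,1]` with `s·h ≤ 1`, all `x` and all directions `i`,
`A_i(ξ^{−3}·exp(−2sφ))(x) ≤ C·ξ(x)^{−3}·exp(−2sφ(x))`. -/
theorem stmt16 (m : ℕ) (hm : 1 ≤ m) (lam K : ℝ) (hlam : 1 ≤ lam) (hK : 0 < K) :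
    ∃ C > 0, ∀ (n : ℕ), 1 ≤ n → ∀ ψ : (Fin n → ℝ) → ℝ,
      ContDiff ℝ 1 ψ → (∀ x, 0 ≤ ψ x ∧ ψ x ≤ 1) → (∀ x, ‖fderiv ℝ ψ x‖ ≤ K) →
      ∀ s h : ℝ, 0 < s → 0 < h → h ≤ 1 → s * h ≤ 1 →
      ∀ (x : Fin n → ℝ) (i : Fin n),
        Aop h i (fun y => ((xiW lam m ψ y) ^ 3)⁻¹
            * Real.exp (-(2 * s * phiW lam m ψ y))) x
          ≤ C * ((xiW lam m ψ x) ^ 3)⁻¹ * Real.exp (-(2 * s * phiW lam m ψ x)) := by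
  set P : ℝ := Real.exp (lam * (1 + 6 * m)) with hP
  refine ⟨Real.exp (3 * lam * K + lam * K * P), Real.exp_pos _, ?_⟩
  intro n hn ψ hψ hψ01 hψK s h hs hh hh1 hsh x i
  have hlip : ∀ y : Fin n → ℝ, ‖y - x‖ ≤ h / 2 →
      |ψ y - ψ x| ≤ K * (h / 2) := by
    intro y hy
    have h1 : ‖ψ y - ψ x‖ ≤ K * ‖y - x‖ :=
      convex_univ.norm_image_sub_le_of_norm_fderiv_le
        (fun z _ => (hψ.differentiable one_ne_zero).differentiableAt)
        (fun z _ => hψK z) (Set.mem_univ x) (Set.mem_univ y)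
    rw [Real.norm_eq_abs] at h1
    exact h1.trans (mul_le_mul_of_nonneg_left hy hK.le)
  have claim : ∀ y : Fin n → ℝ, ‖y - x‖ ≤ h / 2 →
      ((xiW lam m ψ y) ^ 3)⁻¹ * Real.exp (-(2 * s * phiW lam m ψ y))
        ≤ Real.exp (3 * lam * K + lam * K * P) * ((xiW lam m ψ x) ^ 3)⁻¹
            * Real.exp (-(2 * s * phiW lam m ψ x)) := by
    intro y hy
    set a : ℝ := lam * (ψ x + 6 * m) with hadef
    set b : ℝ := lam * (ψ y + 6 * m) with hbdef
    have hlam0 : (0 : ℝ) < lam := lt_of_lt_of_le one_pos hlam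
    have habs : |a - b| ≤ lam * K * (h / 2) := by
      have : a - b = lam * (ψ x - ψ y) := by rw [hadef, hbdef]; ring
      rw [this, abs_mul, abs_of_pos hlam0, abs_sub_comm]
      calc lam * |ψ y - ψ x| ≤ lam * (K * (h / 2)) :=
            mul_le_mul_of_nonneg_left (hlip y hy) hlam0.le
        _ = lam * K * (h / 2) := by ring
    have haM : a ≤ lam * (1 + 6 * m) :=
      mul_le_mul_of_nonneg_left (by linarith [(hψ01 x).2]) hlam0.le
    have hbM : b ≤ lam * (1 + 6 * m) :=
      mul_le_mul_of_nonneg_left (by linarith [(hψ01 y).2]) hlam0.le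
    have hE : Real.exp a - Real.exp b ≤ P * (lam * K * (h / 2)) := by
      refine (exp_sub_le_aux a b _ haM hbM).trans ?_
      exact mul_le_mul_of_nonneg_left habs (Real.exp_pos _).le
    have h5 : 2 * s * (Real.exp a - Real.exp b) ≤ lam * K * P := by
      calc 2 * s * (Real.exp a - Real.exp b) ≤ 2 * s * (P * (lam * K * (h / 2))) :=
            mul_le_mul_of_nonneg_left hE (by positivity)
        _ = (s * h) * (lam * K * P) := by ring
        _ ≤ 1 * (lam * K * P) := by
            refine mul_le_mul_of_nonneg_right hsh (by positivity)
        _ = lam * K * P := one_mul _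
    have h7 : 3 * (a - b) ≤ 3 * lam * K := by
      have h6 : a - b ≤ lam * K * (h / 2) := (le_abs_self _).trans habs
      nlinarith [mul_pos hlam0 hK, mul_le_mul_of_nonneg_left hh1 (mul_pos hlam0 hK).le]
    have hxiX : xiW lam m ψ x = Real.exp a := rfl
    have hxiY : xiW lam m ψ y = Real.exp b := rfl
    have hphiX : phiW lam m ψ x = Real.exp a - lam * Real.exp (6 * lam * (m + 1)) := rfl
    have hphiY : phiW lam m ψ y = Real.exp b - lam * Real.exp (6 * lam * (m + 1)) := rfl
    rw [hxiX, hxiY, hphiX, hphiY, exp_cube_inv, exp_cube_inv, ← Real.exp_add,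
      ← Real.exp_add, ← Real.exp_add]
    rw [Real.exp_le_exp]
    linarith
  have hy1 : ‖(x + Pi.single i (h / 2)) - x‖ ≤ h / 2 := by
    rw [add_sub_cancel_left, Pi.norm_single, Real.norm_eq_abs, abs_of_pos (by positivity)]
  have hy2 : ‖(x - Pi.single i (h / 2)) - x‖ ≤ h / 2 := by
    rw [sub_sub_cancel_left, norm_neg, Pi.norm_single, Real.norm_eq_abs,
      abs_of_pos (by positivity)]
  have c1 := claim _ hy1
  have c2 := claim _ hy2
  unfold Aop
  simp only
  linarith
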